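/- Let n ≥ 5 and x ∈ [0,1]^n. If T ⊆ {1,…,n−1} satisfies T ∩ (T+1) = ∅ (indices cyclic modulo n−1) and φ(T) = Φ*, then x_i + x_{i+1} + x_n ≤ 2 for all i ∈ T. -/

import Mathlib

open Finset

/-- Cyclic successor on the rim `{1, …, n-1}` of the wheel `W_{n-1}`. -/
def wsucc (n i : ℕ) : ℕ := if i = n - 1 then 1 else i + 1

/-- The dual bound `φ(T)`. -/
noncomputable def phiW (n : ℕ) (x : ℕ → ℝ) (T : Finset ℕ) : ℝ :=
  ∑ i ∈ Finset.Icc 1 (n - 1) \ T, max 0 (x i + x (wsucc n i) - 1) +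
  ∑ i ∈ Finset.Icc 1 (n - 1) \ (T ∪ T.image (wsucc n)), max 0 (x i + x n - 1) +
  ∑ i ∈ T, max 0 (x i + x (wsucc n i) + x n - 1)

/-- `Φ* = max{φ(T) : T ⊆ {1,…,n-1}, T ∩ (T+1) = ∅}`. -/
noncomputable def phiStarW (n : ℕ) (x : ℕ → ℝ) : ℝ :=
  ((Finset.Icc 1 (n - 1)).powerset.filter
      (fun T => T ∩ T.image (wsucc n) = ∅)).sup'
    ⟨∅, by simp⟩ (phiW n x)

/-!
Removing `i` from an admissible `T` keeps it admissible and trades the triangle term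
`max{0, a + b + c - 1}` (with `a = x_i`, `b = x_{i+1}`, `c = x_n`) for the three edge terms
`max{0, a + b - 1}`, `max{0, a + c - 1}`, `max{0, b + c - 1}`, whose sum is at least
`2(a + b + c) - 3`. If `a + b + c > 2` this strictly exceeds `a + b + c - 1`, so `T` was not
optimal.
-/

lemma wsucc_mem_Icc {n i : ℕ} (hi : i ∈ Icc 1 (n - 1)) : wsucc n i ∈ Icc 1 (n - 1) := by
  simp only [mem_Icc] at *
  unfold wsucc
  split <;> omega

lemma wsucc_injOn (n : ℕ) : Set.InjOn (wsucc n) (Icc 1 (n - 1) : Set ℕ) := by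
  intro i hi j hj h
  simp only [coe_Icc, Set.mem_Icc] at hi hj
  unfold wsucc at h
  split at h <;> split at h <;> omega

lemma sum_sdiff_eq_add_sum_sdiff_insert {α M : Type*} [DecidableEq α] [AddCommMonoid M]
    {S U : Finset α} {a : α} (haS : a ∈ S) (haU : a ∉ U) (f : α → M) :
    ∑ j ∈ S \ U, f j = f a + ∑ j ∈ S \ insert a U, f j := by
  rw [sdiff_insert, add_sum_erase _ _ (mem_sdiff.2 ⟨haS, haU⟩)]

lemma phiW_le_phiStarW {n : ℕ} (x : ℕ → ℝ) {T : Finset ℕ} (hT : T ⊆ Icc 1 (n - 1))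
    (hdisj : T ∩ T.image (wsucc n) = ∅) : phiW n x T ≤ phiStarW n x :=
  le_sup' _ (mem_filter.2 ⟨mem_powerset.2 hT, hdisj⟩)

lemma phiW_add_triangle {n : ℕ} (x : ℕ → ℝ) {T : Finset ℕ} {i : ℕ} (hT : T ⊆ Icc 1 (n - 1))
    (hi : i ∈ Icc 1 (n - 1)) (hiT : i ∉ T)
    (hdisj : insert i T ∩ (insert i T).image (wsucc n) = ∅) :
    phiW n x T + max 0 (x i + x (wsucc n i) + x n - 1) =
      phiW n x (insert i T) + max 0 (x i + x (wsucc n i) - 1) + max 0 (x i + x n - 1) +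
        max 0 (x (wsucc n i) + x n - 1) := by
  set s := wsucc n i
  have hdisj' := disjoint_iff_inter_eq_empty.2 hdisj
  have hs_img : s ∈ (insert i T).image (wsucc n) := mem_image_of_mem _ (mem_insert_self i T)
  have hs_ins : s ∉ insert i T := disjoint_right.1 hdisj' hs_img
  have hi_img : i ∉ T.image (wsucc n) := fun h =>
    disjoint_left.1 hdisj' (mem_insert_self i T) (image_subset_image (subset_insert i T) h)
  have hs_img' : s ∉ T.image (wsucc n) := by
    intro h
    obtain ⟨j, hj, hjs⟩ := mem_image.1 h
    exact hiT (wsucc_injOn n (by simpa using hT hj) (by simpa using hi) hjs ▸ hj)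
  have hU : insert i T ∪ (insert i T).image (wsucc n) =
      insert s (insert i (T ∪ T.image (wsucc n))) := by
    rw [image_insert]
    ext j
    simp only [mem_union, mem_insert]
    tauto
  have h_edges : ∑ j ∈ Icc 1 (n - 1) \ T, max 0 (x j + x (wsucc n j) - 1) =
      max 0 (x i + x s - 1) +
        ∑ j ∈ Icc 1 (n - 1) \ insert i T, max 0 (x j + x (wsucc n j) - 1) :=
    sum_sdiff_eq_add_sum_sdiff_insert hi hiT _
  have h_spokes : ∑ j ∈ Icc 1 (n - 1) \ (T ∪ T.image (wsucc n)), max 0 (x j + x n - 1) =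
      max 0 (x i + x n - 1) + (max 0 (x s + x n - 1) + ∑ j ∈ Icc 1 (n - 1) \
        (insert i T ∪ (insert i T).image (wsucc n)), max 0 (x j + x n - 1)) := by
    rw [hU, sum_sdiff_eq_add_sum_sdiff_insert hi (by simp [hiT, hi_img]),
      sum_sdiff_eq_add_sum_sdiff_insert (wsucc_mem_Icc hi)]
    obtain ⟨hsi, hsT⟩ := not_or.1 (mem_insert.not.1 hs_ins)
    simp only [mem_insert, mem_union, not_or]
    exact ⟨hsi, hsT, hs_img'⟩
  have h_triangles := sum_insert (f := fun j => max 0 (x j + x (wsucc n j) + x n - 1)) hiT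
  unfold phiW
  rw [h_edges, h_spokes, h_triangles]
  ring

lemma max_zero_add_add_sub_one_lt {a b c : ℝ} (h : 2 < a + b + c) :
    max 0 (a + b + c - 1) < max 0 (a + b - 1) + max 0 (a + c - 1) + max 0 (b + c - 1) := by
  rw [max_eq_right (by linarith)]
  linarith [le_max_right 0 (a + b - 1), le_max_right 0 (a + c - 1), le_max_right 0 (b + c - 1)]

theorem optimal_T_bounded_above_general (n : ℕ) (x : ℕ → ℝ)
    (T : Finset ℕ) (hT : T ⊆ Finset.Icc 1 (n - 1))
    (hdisj : T ∩ T.image (wsucc n) = ∅)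
    (hopt : phiW n x T = phiStarW n x) :
    ∀ i ∈ T, x i + x (wsucc n i) + x n ≤ 2 := by
  intro i hiT
  by_contra! hlt
  have hsub : T.erase i ⊆ T := erase_subset i T
  have hdisj' : T.erase i ∩ (T.erase i).image (wsucc n) = ∅ :=
    subset_empty.1 (hdisj ▸ inter_subset_inter hsub (image_subset_image hsub))
  have hle := phiW_le_phiStarW x (hsub.trans hT) hdisj'
  have hsplit := phiW_add_triangle x (hsub.trans hT) (hT hiT) (notMem_erase i T)
    ((insert_erase hiT).symm ▸ hdisj)
  rw [insert_erase hiT] at hsplit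
  linarith [max_zero_add_add_sub_one_lt hlt]

theorem optimal_T_bounded_above (n : ℕ) (hn : 5 ≤ n) (x : ℕ → ℝ)
    (hx : ∀ i ∈ Finset.Icc 1 n, 0 ≤ x i ∧ x i ≤ 1)
    (T : Finset ℕ) (hT : T ⊆ Finset.Icc 1 (n - 1))
    (hdisj : T ∩ T.image (wsucc n) = ∅)
    (hopt : phiW n x T = phiStarW n x) :
    ∀ i ∈ T, x i + x (wsucc n i) + x n ≤ 2 :=
  optimal_T_bounded_above_general n x T hT hdisj hopt
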